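/- arXiv:1110.4841 — 3 statements merged into one kernel-verified Lean document; each statement's English description precedes it below -/
import Mathlib

section
/- Let Y ⊂ G(M, P^N) be a subvariety with shrinking map σ: Y ⇢ G(M⁻, P^N), M⁻ ≥ 0, satisfying σ(y) ⊂ y for general y. If σ is constant with value an M⁻-plane L, then the union Y' = π_Y(U_Y) ⊂ P^N of the M-planes parametrized by Y is a cone with vertex containing L; that is, for every point y' ∈ Y' and every point p ∈ L, the line through y' and p is contained in Y'. -/
open Module

/-- (Lemma 2.5(2).)  Let `Y` be an irreducible parameter space (a
topological space) of `M`-planes in `P^N`, given by an assignment `P y` of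
`(M+1)`-dimensional subspaces of `V`, and suppose the shrinking map `σ` is constant with
value an `M⁻`-plane `L` (`M⁻ ≥ 0`, i.e. `dim L = M⁻ + 1` with `M⁻ + 1 ≥ 1`), with
`σ(y) = L ⊆ y` for general `y` (i.e. `y` in a dense subset `U`); the locus where
`L ≤ P y` is closed.  Then the union `Y' = π_Y(U_Y)` of the `M`-planes is a cone with
vertex containing `L`: for every point of `Y'` and every point of `L`, the line (indeed
the whole span) through them is contained in `Y'`. -/
theorem stmt8 (K V : Type*) [Field K] [AddCommGroup V] [Module K V]
    [FiniteDimensional K V] {Y : Type*} [TopologicalSpace Y]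
    (P : Y → Submodule K V) (L : Submodule K V) (M Mm : ℕ)
    (hP : ∀ y, finrank K (P y) = M + 1) (hL : finrank K L = Mm + 1)
    (U : Set Y) (hU : Dense U) (hsub : ∀ y ∈ U, L ≤ P y)
    (hclosed : IsClosed {y | L ≤ P y}) :
    ∀ y : Y, ∀ v ∈ P y, ∀ p ∈ L, ∀ a b : K,
      a • v + b • p ∈ {w : V | ∃ y' : Y, w ∈ P y'} := by
  intro y v hv p hp a b
  have hall : ∀ z : Y, L ≤ P z := by
    intro z
    have : z ∈ closure U := hU z
    exact hclosed.closure_subset_iff.mpr hsub this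
  exact ⟨y, (P y).add_mem ((P y).smul_mem a hv) ((P y).smul_mem b (hall y hp))⟩
end

section
/- Let γ: X ⇢ Y be a dominant separable rational map of projective varieties over an algebraically closed field, and suppose for a general point y ∈ Y the closure of the fiber γ^{-1}(y) is a linear subvariety (an m₀-plane) of P^N of dimension m₀ = dim X − dim Y, where X ⊂ P^N. If moreover γ is finite (as a morphism on its domain of definition), then m₀ = 0 and γ is birational onto its image. -/
open Module

/-- (Theorem 1.1 combined with Zak's finiteness, Corollary 3.8.)
Let `γ : X ⇢ Y` be a dominant separable rational map from a projective variety
`X ⊆ P^N = ℙ(V)` such that the closure of a general fiber (i.e. of the fiber over any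
point `y` of a suitable nonempty set `G` of general points of `Y`) is an `m₀`-plane of
`P^N` with `m₀ = dim X − dim Y`: concretely, the fiber over `y ∈ G` is exactly the set of
points of an `m₀`-plane `W ⊆ P^N` lying in `X`, and this plane is contained in `X`.
If moreover `γ` is finite (its fibers over general points are finite), then `m₀ = 0` and
`γ` is birational onto its image: over each general point the fiber is a single (reduced)
point. -/
theorem stmt13 (K V : Type*) [Field K] [IsAlgClosed K]
    [AddCommGroup V] [Module K V] [FiniteDimensional K V]
    {Y : Type*} (X : Set (Projectivization K V)) (γ : X → Y) (m₀ : ℕ)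
    (G : Set Y) (hGne : G.Nonempty)
    (hfin : ∀ y ∈ G, {x : X | γ x = y}.Finite)
    (hlin : ∀ y ∈ G, ∃ W : Submodule K V, finrank K W = m₀ + 1 ∧
      {p : Projectivization K V | p.submodule ≤ W} ⊆ X ∧
      Subtype.val '' {x : X | γ x = y} = {p : Projectivization K V | p.submodule ≤ W}) :
    m₀ = 0 ∧ ∀ y ∈ G, ∃! x : X, γ x = y := by
  have hm : m₀ = 0 := by
    by_contra hm
    obtain ⟨y, hy⟩ := hGne
    obtain ⟨W, hW, -, himg⟩ := hlin y hy
    have hSfin : {p : Projectivization K V | p.submodule ≤ W}.Finite := by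
      rw [← himg]; exact (hfin y hy).image _
    -- W has dimension ≥ 2, so it contains infinitely many lines
    have h2 : 2 ≤ finrank K W := by omega
    have b := Module.finBasis K W
    have hli : LinearIndependent K (fun i : Fin (finrank K W) => ((b i : W) : V)) :=
      b.linearIndependent.map' W.subtype W.ker_subtype
    set u : V := ((b ⟨0, by omega⟩ : W) : V)
    set w : V := ((b ⟨1, by omega⟩ : W) : V)
    have hpair : LinearIndependent K ![u, w] := by
      have := hli.comp (fun i : Fin 2 => (⟨i, by omega⟩ : Fin (finrank K W)))
        (fun i j h => by
          have : (i : ℕ) = j := by simpa using congrArg Fin.val h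
          exact Fin.ext this)
      convert this using 1
      ext i; fin_cases i <;> rfl
    have hindep : ∀ x y : K, x • u + y • w = 0 → x = 0 ∧ y = 0 := by
      intro x z h
      rw [Fintype.linearIndependent_iff] at hpair
      have := hpair ![x, z] (by simpa [Fin.sum_univ_two] using h)
      exact ⟨this 0, this 1⟩
    have hne : ∀ c : K, u + c • w ≠ 0 := by
      intro c h
      have := hindep 1 c (by simpa using h)
      simp at this
    have hmem : ∀ c : K, Projectivization.mk K (u + c • w) (hne c) ∈
        {p : Projectivization K V | p.submodule ≤ W} := by
      intro c
      rw [Set.mem_setOf_eq, Projectivization.submodule_mk, Submodule.span_singleton_le_iff_mem]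
      exact W.add_mem (by simp [u]) (W.smul_mem _ (by simp [w]))
    have hinj : Function.Injective (fun c : K => Projectivization.mk K (u + c • w) (hne c)) := by
      intro c c' h
      rw [Projectivization.mk_eq_mk_iff] at h
      obtain ⟨a, ha⟩ := h
      have h' : (a : K) • u + ((a : K) * c') • w = u + c • w := by
        simpa [Units.smul_def, smul_add, smul_smul] using ha
      have key : ((a : K) - 1) • u + ((a : K) * c' - c) • w = 0 := by
        have e : ((a : K) - 1) • u + ((a : K) * c' - c) • w =
            ((a : K) • u + ((a : K) * c') • w) - (u + c • w) := by
          rw [sub_smul, sub_smul, one_smul]; abel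
        rw [e, h', sub_self]
      obtain ⟨h1, h2⟩ := hindep _ _ key
      have ha1 : (a : K) = 1 := sub_eq_zero.mp h1
      have : (a : K) * c' = c := sub_eq_zero.mp h2
      rw [ha1, one_mul] at this
      exact this.symm
    exact (Set.infinite_of_injective_forall_mem hinj hmem) hSfin
  refine ⟨hm, fun y hy => ?_⟩
  obtain ⟨W, hW, -, himg⟩ := hlin y hy
  rw [hm] at hW
  have hWne : ∃ v : V, v ∈ W ∧ v ≠ 0 := by
    by_contra h
    push_neg at h
    have : W = ⊥ := by
      ext v; simp only [Submodule.mem_bot]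
      exact ⟨fun hv => by by_contra hne; exact hne (h v hv), fun hv => hv ▸ W.zero_mem⟩
    rw [this] at hW; simp at hW
  obtain ⟨v, hvW, hv⟩ := hWne
  have hsub : ∀ p ∈ {p : Projectivization K V | p.submodule ≤ W}, p.submodule = W := by
    intro p hp
    exact Submodule.eq_of_le_of_finrank_eq hp (by rw [p.finrank_submodule, hW])
  have hmk : Projectivization.mk K v hv ∈ {p : Projectivization K V | p.submodule ≤ W} := by
    rw [Set.mem_setOf_eq, Projectivization.submodule_mk, Submodule.span_singleton_le_iff_mem]
    exact hvW
  have hx : Projectivization.mk K v hv ∈ Subtype.val '' {x : X | γ x = y} := by rw [himg]; exact hmk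
  obtain ⟨x, hxγ, hxval⟩ := hx
  refine ⟨x, hxγ, fun x' hx' => ?_⟩
  apply Subtype.ext
  have h1 : (x' : Projectivization K V) ∈ {p : Projectivization K V | p.submodule ≤ W} := by
    rw [← himg]; exact ⟨x', hx', rfl⟩
  have h2 : (x : Projectivization K V) ∈ {p : Projectivization K V | p.submodule ≤ W} := by
    rw [← himg]; exact ⟨x, hxγ, rfl⟩
  exact Projectivization.submodule_injective ((hsub _ h1).trans (hsub _ h2).symm)
end

section
/- Let K be an algebraically closed field of characteristic ≠ 2, and let X ⊂ G(1, P^4) be the closure of the image of the map A² → G(1, P^4) sending (z¹, z²) to the line spanned by the rows of the matrix [[1, 0, z¹, z², 2z¹z²], [0, 1, 0, z¹, (z¹)²]]. Then the union of these lines, i.e., the image of the universal family U_X under projection to P^4, is the closure of the image of A³ → P^4, (z¹, z², η) ↦ (1 : η : z¹ : z² + ηz¹ : 2z¹z² + η(z¹)²), which is the hypersurface in P^4 defined by (Z⁰)²Z⁴ + Z¹(Z²)² − 2Z⁰Z²Z³ = 0 (the twisted plane). -/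
/-!
The cubic is linear in `Z⁴`, `(Z⁰)² Z⁴ + (Z¹(Z²)² − 2Z⁰Z²Z³)`, and the prime `Z⁰` does not
divide the constant term (it would then divide `Z¹(Z²)²`), so the two coefficients are relatively
prime, and a degree-one polynomial with relatively prime coefficients over a domain is irreducible.
-/

open MvPolynomial

theorem Prime.isRelPrime_pow_of_not_dvd {M : Type*} [CommMonoidWithZero M] [IsCancelMulZero M]
    {p b : M} (hp : Prime p) (hb : ¬ p ∣ b) (n : ℕ) : IsRelPrime (p ^ n) b := by
  intro d hd hdb
  obtain ⟨i, -, hi⟩ := (dvd_prime_pow hp n).1 hd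
  rcases i with _ | i
  · exact associated_one_iff_isUnit.1 (by simpa using hi)
  · exact absurd ((dvd_pow_self p i.succ_ne_zero).trans (hi.symm.dvd.trans hdb)) hb

namespace MvPolynomial

variable (R : Type*) [CommRing R] (n : ℕ)

noncomputable def finSuccEquivLast :
    MvPolynomial (Fin (n + 1)) R ≃ₐ[R] Polynomial (MvPolynomial (Fin n) R) :=
  (renameEquiv R _root_.finSuccEquivLast).trans (optionEquivLeft R (Fin n))

variable {R n}

theorem finSuccEquivLast_X_castSucc (i : Fin n) :
    finSuccEquivLast R n (X (Fin.castSucc i)) = Polynomial.C (X i) := by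
  rw [finSuccEquivLast, AlgEquiv.trans_apply, renameEquiv_apply, rename_X,
    _root_.finSuccEquivLast_castSucc, optionEquivLeft_X_some]

theorem finSuccEquivLast_X_last : finSuccEquivLast R n (X (Fin.last n)) = Polynomial.X := by
  rw [finSuccEquivLast, AlgEquiv.trans_apply, renameEquiv_apply, rename_X,
    _root_.finSuccEquivLast_last, optionEquivLeft_X_none]

end MvPolynomial

namespace TwistedPlane

variable {R : Type*} [CommRing R]

variable (R) in
noncomputable def cubic : MvPolynomial (Fin 5) R :=
  X 0 ^ 2 * X 4 + X 1 * X 2 ^ 2 - 2 * (X 0 * X 2 * X 3)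

theorem eval_cubic_param (z₁ z₂ η : R) :
    eval ![1, η, z₁, z₂ + η * z₁, 2 * z₁ * z₂ + η * z₁ ^ 2] (cubic R) = 0 := by
  simp only [cubic, map_sub, map_add, map_mul, map_pow, eval_X, eval_ofNat, Matrix.cons_val_zero,
    Matrix.cons_val_one, Matrix.cons_val]
  ring

theorem finSuccEquivLast_cubic :
    finSuccEquivLast R 4 (cubic R) =
      Polynomial.C (X 0 ^ 2) * Polynomial.X +
        Polynomial.C (X 1 * X 2 ^ 2 - 2 * (X 0 * X 2 * X 3)) := by
  simp only [cubic, map_add, map_sub, map_mul, map_pow, map_ofNat]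
  rw [show (4 : Fin 5) = Fin.last 4 from rfl, finSuccEquivLast_X_last,
    show (0 : Fin 5) = Fin.castSucc 0 from rfl, show (1 : Fin 5) = Fin.castSucc 1 from rfl,
    show (2 : Fin 5) = Fin.castSucc 2 from rfl, show (3 : Fin 5) = Fin.castSucc 3 from rfl]
  simp only [finSuccEquivLast_X_castSucc]
  ring

variable [IsDomain R]

theorem not_X_zero_dvd :
    ¬ (X 0 : MvPolynomial (Fin 4) R) ∣ X 1 * X 2 ^ 2 - 2 * (X 0 * X 2 * X 3) := by
  intro h
  have hdvd : (X 0 : MvPolynomial (Fin 4) R) ∣ X 1 * X 2 ^ 2 := by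
    simpa using dvd_add h (⟨2 * X 2 * X 3, by ring⟩ :
      (X 0 : MvPolynomial (Fin 4) R) ∣ 2 * (X 0 * X 2 * X 3))
  rcases X_prime.dvd_or_dvd hdvd with h1 | h2
  · exact absurd (X_dvd_X.1 h1) (by decide)
  · exact absurd (X_dvd_X.1 (X_prime.dvd_of_dvd_pow h2)) (by decide)

theorem irreducible_cubic : Irreducible (cubic R) := by
  rw [← MulEquiv.irreducible_iff (finSuccEquivLast R 4).toMulEquiv]
  change Irreducible (finSuccEquivLast R 4 (cubic R))
  rw [finSuccEquivLast_cubic]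
  exact Polynomial.irreducible_C_mul_X_add_C (pow_ne_zero 2 (X_ne_zero 0))
    (Prime.isRelPrime_pow_of_not_dvd X_prime not_X_zero_dvd 2)

end TwistedPlane

theorem stmt17_general (K : Type*) [Field K] :
    (∀ z₁ z₂ η : K,
      MvPolynomial.eval
        (![1, η, z₁, z₂ + η * z₁, 2 * z₁ * z₂ + η * z₁ ^ 2] : Fin 5 → K)
        ((X 0) ^ 2 * X 4 + X 1 * (X 2) ^ 2
          - 2 * (X 0 * X 2 * X 3) : MvPolynomial (Fin 5) K) = 0) ∧
    Irreducible ((X 0) ^ 2 * X 4 + X 1 * (X 2) ^ 2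
      - 2 * (X 0 * X 2 * X 3) : MvPolynomial (Fin 5) K) :=
  ⟨TwistedPlane.eval_cubic_param, TwistedPlane.irreducible_cubic⟩

/-- (Example 2.6 (i),(iii),(iv): the twisted plane.)  Let `K` be an
algebraically closed field of characteristic `≠ 2`.  The union of the lines of the family
`X ⊂ G(1, P^4)` parametrized by the rows `(1,0,z¹,z²,2z¹z²)`, `(0,1,0,z¹,(z¹)²)` is the
closure of the image of `(z¹,z²,η) ↦ (1 : η : z¹ : z² + ηz¹ : 2z¹z² + η(z¹)²)`, which is
the hypersurface `(Z⁰)²Z⁴ + Z¹(Z²)² − 2Z⁰Z²Z³ = 0`.  Verifiable content: the cubic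
vanishes identically on the parametrization, and the cubic is irreducible (so the Zariski
closure of the image is exactly this hypersurface). -/
theorem stmt17 (K : Type*) [Field K] [IsAlgClosed K] (h2 : (2 : K) ≠ 0) :
    (∀ z₁ z₂ η : K,
      MvPolynomial.eval
        (![1, η, z₁, z₂ + η * z₁, 2 * z₁ * z₂ + η * z₁ ^ 2] : Fin 5 → K)
        ((X 0) ^ 2 * X 4 + X 1 * (X 2) ^ 2
          - 2 * (X 0 * X 2 * X 3) : MvPolynomial (Fin 5) K) = 0) ∧
    Irreducible ((X 0) ^ 2 * X 4 + X 1 * (X 2) ^ 2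
      - 2 * (X 0 * X 2 * X 3) : MvPolynomial (Fin 5) K) :=
  stmt17_general K
end
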